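/- Let K be a finite simplicial complex, F the set of discrete Morse functions on K, and ~ the transitive-connectedness equivalence relation generated by isomorphisms and birth-death transitions of discrete Morse complexes. Then the quotient F/~ is a single point: all discrete Morse functions on K are transitively connected. -/

import Mathlib

/-!
Birth–death steps only see critical sets. In a discrete Morse function `f`, take a gradient
pair `(α, β)` with `f α` maximal and raise `f β` to a value just above `f α` (maximality keeps
it below the values on the cofaces of `β`). The result is again a discrete Morse function whose
gradient vector field has lost exactly the pair `(α, β)`, so it differs from `f` by a birth.
Iterating reaches a function without gradient pairs, which is one birth away from a fixed
function whose only gradient pair is some facet pair of `K`. If all faces of `K` are vertices,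
no birth is possible, but then every face is critical for every function and the connectedness
homomorphism is the identity.
-/

open Classical
open scoped Classical

noncomputable section

/-- An abstract simplicial complex on a finite vertex set: a finite family of
nonempty finite subsets closed under taking nonempty subsets. -/
structure SComplex (V : Type*) [DecidableEq V] where
  faces : Finset (Finset V)
  nonempty_of_mem : ∀ s ∈ faces, s.Nonempty
  down_closed : ∀ s ∈ faces, ∀ t ⊆ s, t.Nonempty → t ∈ faces

variable {V : Type*} [DecidableEq V] [Fintype V]

/-- `α` is a codimension-one face (facet) of `σ`. -/
def IsFacet {W : Type*} (α σ : Finset W) : Prop := α ⊆ σ ∧ σ.card = α.card + 1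

/-- `f` is a discrete Morse function on `K`. -/
def SComplex.IsDMF (K : SComplex V) (f : Finset V → ℝ) : Prop :=
  ∀ σ ∈ K.faces,
    (K.faces.filter (fun τ => IsFacet σ τ ∧ f τ ≤ f σ)).card ≤ 1 ∧
    (K.faces.filter (fun ν => IsFacet ν σ ∧ f σ ≤ f ν)).card ≤ 1

/-- `σ` is a critical simplex of `f`. -/
def SComplex.IsCritical (K : SComplex V) (f : Finset V → ℝ) (σ : Finset V) : Prop :=
  σ ∈ K.faces ∧
  (K.faces.filter (fun τ => IsFacet σ τ ∧ f τ ≤ f σ)).card = 0 ∧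
  (K.faces.filter (fun ν => IsFacet ν σ ∧ f σ ≤ f ν)).card = 0

/-- The gradient vector field of `f`: pairs `(α,β)` with `α ≺ β`, `f α ≥ f β`. -/
def SComplex.gvf (K : SComplex V) (f : Finset V → ℝ) : Finset (Finset V × Finset V) :=
  (K.faces ×ˢ K.faces).filter (fun p => IsFacet p.1 p.2 ∧ f p.2 ≤ f p.1)

/-- `M` is a matching on the Hasse diagram of `K`. -/
def SComplex.IsMatching (K : SComplex V) (M : Finset (Finset V × Finset V)) : Prop :=
  (∀ p ∈ M, p.1 ∈ K.faces ∧ p.2 ∈ K.faces ∧ IsFacet p.1 p.2) ∧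
  (∀ p ∈ M, ∀ q ∈ M, p ≠ q → p.1 ≠ q.1 ∧ p.1 ≠ q.2 ∧ p.2 ≠ q.1 ∧ p.2 ≠ q.2)

/-- One step of a `V`-path: from `a` go up to its matched simplex `β` and down to `b ≠ a`. -/
def PathStep (M : Finset (Finset V × Finset V)) (a b : Finset V) : Prop :=
  a ≠ b ∧ ∃ β, (a, β) ∈ M ∧ IsFacet b β

/-- A `V`-path, recorded by its list of lower-dimensional simplices. -/
def IsVPath (M : Finset (Finset V × Finset V)) : List (Finset V) → Prop
  | [] => False
  | [_] => True
  | a :: b :: rest => PathStep M a b ∧ IsVPath M (b :: rest)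

/-- `M` has no nontrivial closed `V`-path. -/
def IsAcyclic (M : Finset (Finset V × Finset V)) : Prop :=
  ¬ ∃ (a : Finset V) (l : List (Finset V)), l ≠ [] ∧ IsVPath M (a :: (l ++ [a]))

/-- An acyclic matching (gradient vector field) on `K`. -/
def SComplex.IsAcyclicMatching (K : SComplex V) (M : Finset (Finset V × Finset V)) : Prop :=
  K.IsMatching M ∧ IsAcyclic M

/-- The incidence number `[σ:α] = ±1` for a facet `α ≺ σ`. -/
def incidence (σ α : Finset V) : ℤ :=
  if IsFacet α σ then
    (-1 : ℤ) ^ ((σ.filter (fun w => ∀ v ∈ σ \ α,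
      ((Fintype.equivFin V) w).val < ((Fintype.equivFin V) v).val)).card)
  else 0

/-- The simplex matched above `a` by `M` (or `∅` if `a` is unmatched). -/
def matchOf (M : Finset (Finset V × Finset V)) (a : Finset V) : Finset V :=
  if h : ∃ β, (a, β) ∈ M then h.choose else ∅

/-- The weight `m(γ)` of a path: product of the incidence numbers along it. -/
def pathWeight (M : Finset (Finset V × Finset V)) : List (Finset V) → ℤ
  | [] => 1
  | [_] => 1
  | a :: b :: rest =>
      -(incidence (matchOf M a) a * incidence (matchOf M a) b) * pathWeight M (b :: rest)

/-- All duplicate-free lists with entries in `s`. -/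
def nodupLists (s : Finset (Finset V)) : Finset (List (Finset V)) :=
  s.powerset.biUnion (fun t => t.val.toList.permutations.toFinset)

/-- The (finite) set of `M`-gradient paths in `K` from `a` to `b`. -/
def SComplex.pathsBetween (K : SComplex V) (M : Finset (Finset V × Finset V))
    (a b : Finset V) : Finset (List (Finset V)) :=
  (nodupLists K.faces).filter
    (fun l => IsVPath M l ∧ l.head? = some a ∧ l.getLast? = some b)

/-- The connectedness coefficient `n^M(σ, α)`: signed count of gradient paths from
the boundary of `σ` to `α`, weighted by incidence numbers. -/
def SComplex.nCoeff (K : SComplex V) (M : Finset (Finset V × Finset V))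
    (σ α : Finset V) : ℤ :=
  ∑ β ∈ K.faces.filter (fun β => IsFacet β σ),
    incidence σ β * ∑ l ∈ K.pathsBetween M β α, pathWeight M l

/-- The 0-dimensional connectedness coefficient: signed count of paths from `a` to `b`. -/
def SComplex.nCoeff0 (K : SComplex V) (M : Finset (Finset V × Finset V))
    (a b : Finset V) : ℤ :=
  ∑ l ∈ K.pathsBetween M a b, pathWeight M l

end

noncomputable section

variable {V : Type*} [DecidableEq V] [Fintype V]

/-- The connectedness homomorphism `C_*^{f₁} → C_*^{f₂}` between the discrete Morse
complexes (chain groups freely generated by critical simplices), defined on basis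
elements by summing connectedness coefficients (with the dimension-0 convention). -/
def connHom (K : SComplex V) (f₁ f₂ : Finset V → ℝ) :
    ({σ : Finset V // K.IsCritical f₁ σ} →₀ ℤ) →ₗ[ℤ]
    ({σ : Finset V // K.IsCritical f₂ σ} →₀ ℤ) :=
  Finsupp.lsum ℤ (fun σ => LinearMap.toSpanSingleton ℤ _
    (∑ τ ∈ Finset.univ.filter (fun τ : {σ : Finset V // K.IsCritical f₂ σ} =>
        τ.1.card = σ.1.card),
      (if σ.1.card = 1 then K.nCoeff0 (K.gvf f₂) σ.1 τ.1
       else K.nCoeff (K.gvf f₁) σ.1 τ.1) • Finsupp.single τ 1))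

/-- `f₁, f₂` differ by a birth: the critical simplices of `f₂` are those of `f₁`
together with one extra pair `(σ̃, α̃)` in consecutive dimensions `(i, i−1)`. -/
def BDPair (K : SComplex V) (f₁ f₂ : Finset V → ℝ) : Prop :=
  ∃ (i : ℕ) (σt αt : Finset V), 1 ≤ i ∧ σt ∈ K.faces ∧ αt ∈ K.faces ∧
    σt.card = i + 1 ∧ αt.card = i ∧
    K.IsCritical f₂ σt ∧ K.IsCritical f₂ αt ∧
    ¬ K.IsCritical f₁ σt ∧ ¬ K.IsCritical f₁ αt ∧
    ∀ δ, δ ≠ σt → δ ≠ αt → (K.IsCritical f₁ δ ↔ K.IsCritical f₂ δ)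

/-- One step: the connectedness homomorphism is an isomorphism, or a birth or death
transition (critical sets differ by one pair in consecutive dimensions). -/
def TStep (K : SComplex V) (f₁ f₂ : Finset V → ℝ) : Prop :=
  Function.Bijective (connHom K f₁ f₂) ∨ BDPair K f₁ f₂ ∨ BDPair K f₂ f₁

/-- Transitive connectedness of discrete Morse functions: existence of a finite
sequence of discrete Morse functions in which each consecutive connectedness
homomorphism is an isomorphism or a birth/death transition. -/
def TRel (K : SComplex V) (f g : {f : Finset V → ℝ // K.IsDMF f}) : Prop :=
  ∃ (n : ℕ) (F : ℕ → {f : Finset V → ℝ // K.IsDMF f}),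
    F 0 = f ∧ F n = g ∧ ∀ j < n, TStep K (F j).1 (F (j + 1)).1

end

open Function Relation

namespace SComplex

variable {V : Type*} [DecidableEq V] {K : SComplex V} {f g : Finset V → ℝ}

theorem mem_gvf {p : Finset V × Finset V} :
    p ∈ K.gvf f ↔ p.1 ∈ K.faces ∧ p.2 ∈ K.faces ∧ IsFacet p.1 p.2 ∧ f p.2 ≤ f p.1 := by
  simp [SComplex.gvf, and_assoc]

theorem isCritical_iff {σ : Finset V} :
    K.IsCritical f σ ↔ σ ∈ K.faces ∧ ∀ p ∈ K.gvf f, p.1 ≠ σ ∧ p.2 ≠ σ := by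
  simp only [IsCritical, Finset.card_eq_zero, Finset.filter_eq_empty_iff, mem_gvf]
  constructor
  · rintro ⟨hσ, hup, hdown⟩
    refine ⟨hσ, fun ⟨ν, τ⟩ ⟨hν, hτ, hfac, hle⟩ => ⟨?_, ?_⟩⟩
    · rintro rfl; exact hup hτ ⟨hfac, hle⟩
    · rintro rfl; exact hdown hν ⟨hfac, hle⟩
  · rintro ⟨hσ, h⟩
    exact ⟨hσ, fun τ hτ hστ => (h (σ, τ) ⟨hσ, hτ, hστ.1, hστ.2⟩).1 rfl,
      fun ν hν hνσ => (h (ν, σ) ⟨hν, hσ, hνσ.1, hνσ.2⟩).2 rfl⟩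

theorem IsDMF.eq_of_fst_eq (hf : K.IsDMF f) {p q : Finset V × Finset V}
    (hp : p ∈ K.gvf f) (hq : q ∈ K.gvf f) (h : p.1 = q.1) : p = q := by
  obtain ⟨hp₁, hp₂, hpf, hpl⟩ := mem_gvf.1 hp
  obtain ⟨-, hq₂, hqf, hql⟩ := mem_gvf.1 hq
  rw [← h] at hqf hql
  refine Prod.ext h (Finset.card_le_one.1 (hf p.1 hp₁).1 _ ?_ _ ?_) <;>
    simp only [Finset.mem_filter] <;> tauto

theorem IsDMF.eq_of_snd_eq (hf : K.IsDMF f) {p q : Finset V × Finset V}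
    (hp : p ∈ K.gvf f) (hq : q ∈ K.gvf f) (h : p.2 = q.2) : p = q := by
  obtain ⟨hp₁, hp₂, hpf, hpl⟩ := mem_gvf.1 hp
  obtain ⟨hq₁, -, hqf, hql⟩ := mem_gvf.1 hq
  rw [← h] at hqf hql
  refine Prod.ext (Finset.card_le_one.1 (hf p.2 hp₂).2 _ ?_ _ ?_) h <;>
    simp only [Finset.mem_filter] <;> tauto

theorem exists_isFacet_between_ne {ν σ τ : Finset V} (hτ : τ ∈ K.faces)
    (hνσ : IsFacet ν σ) (hστ : IsFacet σ τ) :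
    ∃ σ' ∈ K.faces, σ' ≠ σ ∧ IsFacet ν σ' ∧ IsFacet σ' τ := by
  obtain ⟨y, hyτ, hyσ⟩ : ∃ y ∈ τ, y ∉ σ := Finset.exists_of_ssubset
    (Finset.ssubset_iff_subset_ne.2 ⟨hστ.1, fun h => by simp [h, IsFacet] at hστ⟩)
  have hyν : y ∉ ν := fun h => hyσ (hνσ.1 h)
  have hsub : insert y ν ⊆ τ := Finset.insert_subset hyτ (hνσ.1.trans hστ.1)
  refine ⟨insert y ν, K.down_closed τ hτ _ hsub (Finset.insert_nonempty _ _),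
    fun h => hyσ (h ▸ Finset.mem_insert_self y ν), ⟨Finset.subset_insert _ _, ?_⟩, hsub, ?_⟩
  · exact Finset.card_insert_of_notMem hyν
  · rw [Finset.card_insert_of_notMem hyν, hστ.2, hνσ.2]

theorem IsDMF.snd_ne_fst (hf : K.IsDMF f) {p q : Finset V × Finset V}
    (hp : p ∈ K.gvf f) (hq : q ∈ K.gvf f) : p.2 ≠ q.1 := by
  obtain ⟨ν, σ⟩ := p
  obtain ⟨σ₁, τ⟩ := q
  rintro (rfl : σ = σ₁)
  obtain ⟨hν, hσ, hνσ, hσν⟩ := mem_gvf.1 hp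
  obtain ⟨-, hτ, hστ, hτσ⟩ := mem_gvf.1 hq
  obtain ⟨σ', hσ', hne, hνσ', hσ'τ⟩ := exists_isFacet_between_ne hτ hνσ hστ
  -- in the diamond `ν ⊂ σ, σ' ⊂ τ`, uniqueness of low pairs forces `f ν < f σ' < f τ ≤ f σ ≤ f ν`
  have hτσ' : f σ' < f τ := lt_of_not_ge fun hle => hne <| congrArg Prod.fst <|
    hf.eq_of_snd_eq (p := (σ', τ)) (mem_gvf.2 ⟨hσ', hτ, hσ'τ, hle⟩) hq rfl
  have hσ'ν : f ν < f σ' := lt_of_not_ge fun hle => hne <| congrArg Prod.snd <|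
    hf.eq_of_fst_eq (p := (ν, σ')) (mem_gvf.2 ⟨hν, hσ', hνσ', hle⟩) hp rfl
  simp only at hσν hτσ
  linarith

theorem IsDMF.isMatching (hf : K.IsDMF f) : K.IsMatching (K.gvf f) :=
  ⟨fun _ hp => (mem_gvf.1 hp).imp_right fun h => ⟨h.1, h.2.1⟩,
    fun _ hp _ hq hpq => ⟨fun h => hpq (hf.eq_of_fst_eq hp hq h),
      fun h => hf.snd_ne_fst hq hp h.symm, hf.snd_ne_fst hp hq,
      fun h => hpq (hf.eq_of_snd_eq hp hq h)⟩⟩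

theorem isDMF_of_isMatching (h : K.IsMatching (K.gvf f)) : K.IsDMF f := by
  refine fun σ hσ => ⟨Finset.card_le_one.2 fun τ hτ τ' hτ' => ?_,
    Finset.card_le_one.2 fun ν hν ν' hν' => ?_⟩
  all_goals
    simp only [Finset.mem_filter] at *
    by_contra hne
  · exact (h.2 (σ, τ) (mem_gvf.2 ⟨hσ, hτ.1, hτ.2⟩) (σ, τ') (mem_gvf.2 ⟨hσ, hτ'.1, hτ'.2⟩)
      (by simpa using hne)).1 rfl
  · exact (h.2 (ν, σ) (mem_gvf.2 ⟨hν.1, hσ, hν.2⟩) (ν', σ) (mem_gvf.2 ⟨hν'.1, hσ, hν'.2⟩)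
      (by simpa using hne)).2.2.2 rfl

theorem IsMatching.subset {M M' : Finset (Finset V × Finset V)} (h : K.IsMatching M)
    (hM : M' ⊆ M) : K.IsMatching M' :=
  ⟨fun p hp => h.1 p (hM hp), fun p hp q hq => h.2 p (hM hp) q (hM hq)⟩

theorem bdPair_of_gvf_eq_erase (hf : K.IsDMF f) {α β : Finset V} (hp : (α, β) ∈ K.gvf f)
    (hg : K.gvf g = (K.gvf f).erase (α, β)) : BDPair K f g := by
  obtain ⟨hα, hβ, hαβ, -⟩ := mem_gvf.1 hp
  have hgf : ∀ q ∈ K.gvf g, q ≠ (α, β) ∧ q ∈ K.gvf f := fun q hq =>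
    Finset.mem_erase.1 (hg ▸ hq)
  have hcrit : ∀ δ, δ = α ∨ δ = β → K.IsCritical g δ := fun δ hδ =>
    isCritical_iff.2 ⟨by rcases hδ with rfl | rfl <;> assumption, fun q hq => by
      have := hf.isMatching.2 q (hgf q hq).2 _ hp (hgf q hq).1
      rcases hδ with rfl | rfl <;> tauto⟩
  have hnc : ∀ δ, δ = α ∨ δ = β → ¬ K.IsCritical f δ := fun δ hδ hc => by
    have := (isCritical_iff.1 hc).2 _ hp
    rcases hδ with rfl | rfl <;> simp at this
  refine ⟨α.card, β, α, Finset.card_pos.2 (K.nonempty_of_mem α hα), hβ, hα, hαβ.2, rfl,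
    hcrit β (.inr rfl), hcrit α (.inl rfl), hnc β (.inr rfl), hnc α (.inl rfl),
    fun δ hδβ hδα => ?_⟩
  simp only [isCritical_iff, and_congr_right_iff]
  refine fun _ => ⟨fun h q hq => h q (hgf q hq).2, fun h q hq => ?_⟩
  by_cases hqp : q = (α, β)
  · subst hqp; exact ⟨Ne.symm hδα, Ne.symm hδβ⟩
  · exact h q (hg ▸ Finset.mem_erase.2 ⟨hqp, hq⟩)

theorem IsDMF.lt_of_isFacet_of_max (hf : K.IsDMF f) {α β τ : Finset V}
    (hp : (α, β) ∈ K.gvf f) (hmax : ∀ q ∈ K.gvf f, f q.1 ≤ f α) (hτ : τ ∈ K.faces)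
    (hβτ : IsFacet β τ) : f α < f τ := by
  by_contra! hτα
  obtain ⟨hα, -, hαβ, -⟩ := mem_gvf.1 hp
  obtain ⟨σ', hσ', hne, hασ', hσ'τ⟩ := exists_isFacet_between_ne hτ hαβ hβτ
  have hασ'lt : f α < f σ' := lt_of_not_ge fun hle => hne <| congrArg Prod.snd <|
    hf.eq_of_fst_eq (p := (α, σ')) (mem_gvf.2 ⟨hα, hσ', hασ', hle⟩) hp rfl
  exact hασ'lt.not_ge (hmax (σ', τ) (mem_gvf.2 ⟨hσ', hτ, hσ'τ, by linarith⟩))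

theorem IsDMF.gvf_update_eq_erase (hf : K.IsDMF f) {α β : Finset V} (hp : (α, β) ∈ K.gvf f)
    {c : ℝ} (hαc : f α < c) (hcτ : ∀ τ ∈ K.faces, IsFacet β τ → c < f τ) :
    K.gvf (update f β c) = (K.gvf f).erase (α, β) := by
  have hβα : f β ≤ f α := (mem_gvf.1 hp).2.2.2
  ext ⟨ν, σ⟩
  simp only [Finset.mem_erase, mem_gvf, ne_eq, Prod.mk.injEq]
  by_cases hσβ : σ = β
  · subst hσβ
    refine iff_of_false ?_ fun ⟨hne, hν, hσ, hνσ, hle⟩ => hne ⟨congrArg Prod.fst <|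
      hf.eq_of_snd_eq (p := (ν, σ)) (mem_gvf.2 ⟨hν, hσ, hνσ, hle⟩) hp rfl, rfl⟩
    rintro ⟨hν, -, hνσ, hle⟩
    rw [update_self, update_of_ne (fun h => by simp [h, IsFacet] at hνσ)] at hle
    by_cases hνα : ν = α
    · subst hνα; linarith
    · have : f ν < f σ := lt_of_not_ge fun h => hνα <| congrArg Prod.fst <|
        hf.eq_of_snd_eq (p := (ν, σ)) (mem_gvf.2 ⟨hν, (mem_gvf.1 hp).2.1, hνσ, h⟩) hp rfl
      linarith
  by_cases hνβ : ν = β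
  · subst hνβ
    refine iff_of_false ?_ fun ⟨_, hν, hσ, hνσ, hle⟩ =>
      hf.snd_ne_fst hp (q := (ν, σ)) (mem_gvf.2 ⟨hν, hσ, hνσ, hle⟩) rfl
    rintro ⟨-, hσ, hνσ, hle⟩
    rw [update_self, update_of_ne hσβ] at hle
    exact absurd (hcτ σ hσ hνσ) (not_lt.2 hle)
  · rw [update_of_ne hσβ, update_of_ne hνβ]
    tauto

theorem IsDMF.exists_gvf_eq_erase (hf : K.IsDMF f) (hne : (K.gvf f).Nonempty) :
    ∃ p ∈ K.gvf f, ∃ g, K.gvf g = (K.gvf f).erase p := by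
  obtain ⟨⟨α, β⟩, hp, hmax⟩ := Finset.exists_max_image (K.gvf f) (fun q => f q.1) hne
  obtain ⟨c, hαc, hcτ⟩ := Finset.exists_between (s := {f α})
    (t := insert (f α + 1) ((K.faces.filter (IsFacet β ·)).image f)) (by simp) (by simp)
    (by simpa using fun _ τ hτ hβτ h => h ▸ hf.lt_of_isFacet_of_max hp hmax hτ hβτ)
  refine ⟨_, hp, update f β c, hf.gvf_update_eq_erase hp (by simpa using hαc) ?_⟩
  exact fun τ hτ hβτ => hcτ (f τ) (by simp; tauto)

theorem exists_gvf_eq_singleton {α β : Finset V} (hα : α ∈ K.faces) (hβ : β ∈ K.faces)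
    (hαβ : IsFacet α β) : ∃ f, K.IsDMF f ∧ K.gvf f = {(α, β)} := by
  -- the common value of `α` and `β` lies strictly between those of the other faces of their sizes
  suffices h : K.gvf (fun σ =>
      ((if σ = α ∨ σ = β then 2 * α.card + 1 else 2 * σ.card : ℕ) : ℝ)) = {(α, β)} from
    ⟨_, isDMF_of_isMatching (h ▸ ⟨by simp [hα, hβ, hαβ], by simp⟩), h⟩
  ext ⟨ν, σ⟩
  simp only [mem_gvf, Finset.mem_singleton, Prod.mk.injEq, Nat.cast_le]
  constructor
  · rintro ⟨-, -, hνσ, hle⟩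
    have := hνσ.2; have := hαβ.2
    split_ifs at hle with hν hσ hσ <;> (try rcases hν with rfl | rfl) <;>
      (try rcases hσ with rfl | rfl) <;> first | exact ⟨rfl, rfl⟩ | omega
  · rintro ⟨rfl, rfl⟩
    exact ⟨hα, hβ, hαβ, by simp⟩

theorem exists_isFacet_of_two_le_card {β : Finset V} (hβ : β ∈ K.faces) (h : 2 ≤ β.card) :
    ∃ α ∈ K.faces, IsFacet α β := by
  obtain ⟨x, hx⟩ := Finset.card_pos.1 (by omega : 0 < β.card)
  refine ⟨β.erase x, K.down_closed β hβ _ (Finset.erase_subset x β) ?_,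
    Finset.erase_subset x β, by rw [Finset.card_erase_of_mem hx]; omega⟩
  rw [← Finset.card_pos, Finset.card_erase_of_mem hx]; omega

theorem gvf_eq_empty_of_card_eq_one (hK : ∀ σ ∈ K.faces, σ.card = 1) : K.gvf f = ∅ :=
  Finset.eq_empty_of_forall_notMem fun _ hp => by
    obtain ⟨hν, hσ, hνσ, -⟩ := mem_gvf.1 hp
    have := hνσ.2
    rw [hK _ hν, hK _ hσ] at this
    omega

theorem eqvGen_bdPair_of_gvf_eq_singleton {α β : Finset V} {f₀ : {f // K.IsDMF f}}
    (h₀ : K.gvf f₀.1 = {(α, β)}) (f : {f // K.IsDMF f}) :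
    EqvGen (BDPair K on Subtype.val) f₀ f := by
  induction hn : (K.gvf f.1).card using Nat.strong_induction_on generalizing f with
  | _ n ih =>
  rcases (K.gvf f.1).eq_empty_or_nonempty with hempty | hne
  · refine .rel _ _ (bdPair_of_gvf_eq_erase f₀.2 (α := α) (β := β) (by simp [h₀]) ?_)
    rw [hempty, h₀, Finset.erase_singleton]
  · obtain ⟨p, hp, g, hg⟩ := f.2.exists_gvf_eq_erase hne
    have hgf : K.gvf g ⊆ K.gvf f.1 := hg ▸ Finset.erase_subset _ _
    let g' : {f // K.IsDMF f} := ⟨g, isDMF_of_isMatching (f.2.isMatching.subset hgf)⟩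
    exact .trans _ g' _ (ih _ (hn ▸ hg ▸ Finset.card_erase_lt_of_mem hp) g' rfl)
      (.symm _ _ (.rel _ _ (bdPair_of_gvf_eq_erase f.2 hp hg)))

end SComplex

section

variable {V : Type*}

theorem isVPath_empty_iff {l : List (Finset V)} : IsVPath ∅ l ↔ ∃ a, l = [a] := by
  match l with
  | [] => simp [IsVPath]
  | [a] => simp [IsVPath]
  | _ :: _ :: _ => simp [IsVPath, PathStep]

variable [DecidableEq V]

theorem singleton_mem_nodupLists {s : Finset (Finset V)} {a : Finset V} (ha : a ∈ s) :
    [a] ∈ nodupLists s := by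
  simp only [nodupLists, Finset.mem_biUnion, List.mem_toFinset, List.mem_permutations]
  exact ⟨{a}, by simpa using ha, by simp⟩

theorem SComplex.pathsBetween_empty {K : SComplex V} {a : Finset V} (ha : a ∈ K.faces)
    (b : Finset V) : K.pathsBetween ∅ a b = if a = b then {[a]} else ∅ := by
  ext l
  simp only [SComplex.pathsBetween, Finset.mem_filter, isVPath_empty_iff]
  constructor
  · rintro ⟨-, ⟨x, rfl⟩, hx, hb⟩
    simp_all
  · split_ifs with hab <;> simp only [Finset.mem_singleton, Finset.notMem_empty] <;>
      rintro ⟨⟩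
    exact ⟨singleton_mem_nodupLists ha, ⟨a, rfl⟩, rfl, by simp [hab]⟩

variable [Fintype V] {K : SComplex V}

theorem SComplex.nCoeff0_empty {a : Finset V} (ha : a ∈ K.faces)
    (b : Finset V) : K.nCoeff0 ∅ a b = if a = b then 1 else 0 := by
  rw [SComplex.nCoeff0, K.pathsBetween_empty ha]
  split_ifs <;> simp [pathWeight]

theorem TRel.of_reflTransGen {f g : {f // K.IsDMF f}}
    (h : ReflTransGen (TStep K on Subtype.val) f g) : TRel K f g := by
  induction h with
  | refl => exact ⟨0, fun _ => f, rfl, rfl, by simp⟩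
  | @tail _ c _ hstep ih =>
    obtain ⟨n, F, h0, hn, hF⟩ := ih
    refine ⟨n + 1, fun j => if j ≤ n then F j else c, by simpa using h0, by simp,
      fun j hj => ?_⟩
    rcases Nat.lt_succ_iff_lt_or_eq.1 hj with hj | rfl
    · simpa [hj.le, Nat.succ_le_of_lt hj] using hF j hj
    · simpa [hn] using hstep

theorem TRel.of_eqvGen {f g : {f // K.IsDMF f}} (h : EqvGen (BDPair K on Subtype.val) f g) :
    TRel K f g := by
  rw [← EqvGen.reflTransGen_symmGen] at h
  exact .of_reflTransGen (ReflTransGen.mono (fun _ _ => Or.inr) f g h)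

theorem connHom_bijective_of_card_eq_one (hK : ∀ σ ∈ K.faces, σ.card = 1)
    (f g : Finset V → ℝ) : Bijective (connHom K f g) := by
  have hcrit : ∀ {h : Finset V → ℝ} σ, K.IsCritical h σ ↔ σ ∈ K.faces := fun σ => by
    simp [SComplex.isCritical_iff, SComplex.gvf_eq_empty_of_card_eq_one hK]
  let e : {σ // K.IsCritical f σ} ≃ {σ // K.IsCritical g σ} :=
    Equiv.subtypeEquivRight fun σ => (hcrit σ).trans (hcrit σ).symm
  suffices connHom K f g = (Finsupp.domLCongr e).toLinearMap from
    this ▸ (Finsupp.domLCongr e).bijective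
  refine Finsupp.lhom_ext' fun σ => LinearMap.ext_ring ?_
  simp only [connHom, LinearMap.comp_apply, Finsupp.lsingle_apply, Finsupp.lsum_single,
    LinearMap.toSpanSingleton_apply, one_smul, LinearEquiv.coe_coe, Finsupp.domLCongr_single]
  have hσ := σ.2.1
  rw [Finset.filter_true_of_mem fun τ _ => by rw [hK _ τ.2.1, hK _ hσ]]
  simp only [if_pos (hK _ hσ), SComplex.gvf_eq_empty_of_card_eq_one hK, K.nCoeff0_empty hσ,
    ite_smul, one_smul, zero_smul]
  change (∑ τ : {σ // K.IsCritical g σ}, if (e σ).1 = τ.1 then _ else 0) = _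
  simp only [← Subtype.ext_iff, Finset.sum_ite_eq, Finset.mem_univ, if_true]

/-- the quotient of the set of discrete Morse functions on `K` by
transitive connectedness is a single point: any two discrete Morse functions on `K`
are transitively connected. -/
theorem TRel_quotient_single_point (K : SComplex V) :
    (∀ f g : {f : Finset V → ℝ // K.IsDMF f}, TRel K f g) ∧
    Subsingleton (Quot (TRel K)) := by
  have hconn : ∀ f g : {f : Finset V → ℝ // K.IsDMF f}, TRel K f g := by
    by_cases hK : ∃ β ∈ K.faces, 2 ≤ β.card
    · obtain ⟨β, hβ, hβ2⟩ := hK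
      obtain ⟨α, hα, hαβ⟩ := SComplex.exists_isFacet_of_two_le_card hβ hβ2
      obtain ⟨f₀, hf₀, h₀⟩ := SComplex.exists_gvf_eq_singleton hα hβ hαβ
      have hf₀conn := SComplex.eqvGen_bdPair_of_gvf_eq_singleton (f₀ := ⟨f₀, hf₀⟩) h₀
      exact fun f g => .of_eqvGen (.trans _ _ _ (.symm _ _ (hf₀conn f)) (hf₀conn g))
    · push Not at hK
      have hK₁ : ∀ σ ∈ K.faces, σ.card = 1 := fun σ hσ => by
        have := hK σ hσ
        have := (K.nonempty_of_mem σ hσ).card_pos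
        omega
      exact fun f g =>
        .of_reflTransGen (.single (.inl (connHom_bijective_of_card_eq_one hK₁ f.1 g.1)))
  exact ⟨hconn, ⟨Quot.ind fun f => Quot.ind fun g => Quot.sound (hconn f g)⟩⟩

end
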